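/- arXiv:1912.11397 — 3 statements merged into one kernel-verified Lean document; each statement's English description precedes it below -/
import Mathlib

section
/- Let C be a (d+2)-angulated category and A_0 → A_1 → ⋯ → A_{d-1} → L ⊕ M → N → Σ^d A_0 a (d+2)-angle in which the component A_{d-1} → L of the map A_{d-1} → L ⊕ M is zero. Then the component map L → N of L ⊕ M → N is a split monomorphism. -/
open CategoryTheory CategoryTheory.Limits ZeroObject

universe v u

variable (C : Type u) [Category.{v} C]

/-- A `(d+2)`-`Σᵈ`-sequence: objects `A₀, …, A_{d+1}` with morphisms between consecutive
ones and a connecting morphism `A_{d+1} ⟶ Σᵈ A₀`. -/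
structure DAngle (S : C ≌ C) (d : ℕ) where
  obj : Fin (d + 2) → C
  mor : ∀ i : Fin (d + 1), obj i.castSucc ⟶ obj i.succ
  conn : obj ⟨d + 1, Nat.lt_succ_self _⟩ ⟶ S.functor.obj (obj ⟨0, Nat.succ_pos _⟩)

attribute [local instance] CategoryTheory.Limits.hasBinaryBiproducts_of_finite_biproducts

variable {C}

namespace DAngle

variable {S : C ≌ C} {d : ℕ}

/-- Morphisms of `(d+2)`-`Σᵈ`-sequences. -/
structure Hom (A B : DAngle C S d) where
  hom : ∀ i : Fin (d + 2), A.obj i ⟶ B.obj i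
  comm : ∀ i : Fin (d + 1), A.mor i ≫ hom i.succ = hom i.castSucc ≫ B.mor i
  comm_conn : A.conn ≫ S.functor.map (hom ⟨0, Nat.succ_pos _⟩) =
      hom ⟨d + 1, Nat.lt_succ_self _⟩ ≫ B.conn

/-- A morphism of `(d+2)`-`Σᵈ`-sequences is an isomorphism if all its components are. -/
def Hom.IsIso {A B : DAngle C S d} (f : Hom A B) : Prop :=
  ∀ i : Fin (d + 2), CategoryTheory.IsIso (f.hom i)

/-- The extended object sequence of a `(d+2)`-`Σᵈ`-sequence, with `Σᵈ A₀` appended. -/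
noncomputable def objS (A : DAngle C S d) : Fin (d + 3) → C :=
  Fin.snoc A.obj (S.functor.obj (A.obj ⟨0, Nat.succ_pos _⟩))

lemma objS_eq_of_lt (A : DAngle C S d) (i : Fin (d + 3)) (h : (i : ℕ) < d + 2) :
    A.objS i = A.obj ⟨i, h⟩ := by
  rcases i with ⟨i, hi⟩
  simp [objS, Fin.snoc, h]

lemma objS_eq_of_eq (A : DAngle C S d) (i : Fin (d + 3)) (h : (i : ℕ) = d + 2) :
    A.objS i = S.functor.obj (A.obj ⟨0, Nat.succ_pos _⟩) := by
  rcases i with ⟨i, hi⟩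
  subst h
  simp [objS, Fin.snoc]

/-- The extended morphism sequence, the last morphism being the connecting morphism. -/
noncomputable def morS (A : DAngle C S d) (i : Fin (d + 2)) : A.objS i.castSucc ⟶ A.objS i.succ :=
  if h : (i : ℕ) < d + 1 then
    eqToHom (A.objS_eq_of_lt i.castSucc (by simp only [Fin.coe_castSucc]; omega)) ≫
      A.mor ⟨(i : ℕ), h⟩ ≫
      eqToHom (A.objS_eq_of_lt i.succ (by simp only [Fin.val_succ]; omega)).symm
  else
    eqToHom (by
      rw [A.objS_eq_of_lt i.castSucc (by simp only [Fin.coe_castSucc]; omega)]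
      congr 1
      ext
      simp only [Fin.coe_castSucc]
      omega) ≫ A.conn ≫
      eqToHom (A.objS_eq_of_eq i.succ (by simp only [Fin.val_succ]; omega)).symm

variable [Preadditive C]

/-- The left rotation of a `(d+2)`-`Σᵈ`-sequence. -/
noncomputable def rotate (A : DAngle C S d) : DAngle C S d where
  obj i := A.objS i.succ
  mor i := A.morS i.succ
  conn :=
    eqToHom (A.objS_eq_of_eq (Fin.succ ⟨d + 1, Nat.lt_succ_self _⟩) (by simp only [Fin.val_succ])) ≫
      (((-1 : ℤ) ^ d) • S.functor.map (A.mor ⟨0, Nat.succ_pos _⟩)) ≫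
      eqToHom (congrArg S.functor.obj
        (A.objS_eq_of_lt (Fin.succ ⟨0, Nat.succ_pos _⟩) (by simp only [Fin.val_succ]; omega)).symm)

variable [HasZeroObject C] [HasFiniteBiproducts C]

/-- The direct sum of two `(d+2)`-`Σᵈ`-sequences. -/
noncomputable def sum (A B : DAngle C S d) : DAngle C S d where
  obj i := A.obj i ⊞ B.obj i
  mor i := biprod.map (A.mor i) (B.mor i)
  conn := biprod.desc (A.conn ≫ S.functor.map biprod.inl) (B.conn ≫ S.functor.map biprod.inr)

/-- The trivial `(d+2)`-`Σᵈ`-sequence `X = X → 0 → ⋯ → 0 → Σᵈ X` on an object `X`. -/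
noncomputable def trivial (S : C ≌ C) (d : ℕ) (X : C) : DAngle C S d where
  obj i := if (i : ℕ) ≤ 1 then X else 0
  mor i :=
    if h : (i : ℕ) = 0 then
      eqToHom (by simp only [Fin.coe_castSucc, h]; simp) ≫ 𝟙 X ≫
        eqToHom (by simp only [Fin.val_succ, h]; simp)
    else 0
  conn := 0

/-- The mapping cone of a morphism of `(d+2)`-`Σᵈ`-sequences. -/
noncomputable def cone {A B : DAngle C S d} (f : Hom A B) : DAngle C S d where
  obj i := A.objS i.succ ⊞ B.obj i
  mor i :=
    biprod.lift (biprod.fst ≫ (-(A.morS i.succ)))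
      (biprod.fst ≫ (eqToHom (A.objS_eq_of_lt i.succ.castSucc
            (by simp only [Fin.coe_castSucc, Fin.val_succ]; omega)) ≫
          f.hom ⟨(i : ℕ) + 1, by omega⟩) + biprod.snd ≫ B.mor i)
  conn :=
    biprod.desc
      (eqToHom (A.objS_eq_of_eq (Fin.succ ⟨d + 1, Nat.lt_succ_self _⟩)
          (by simp only [Fin.val_succ])) ≫
        S.functor.map
          (biprod.lift
            ((-(A.mor ⟨0, Nat.succ_pos _⟩)) ≫
              eqToHom (A.objS_eq_of_lt (Fin.succ ⟨0, Nat.succ_pos _⟩)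
                (by simp only [Fin.val_succ]; omega)).symm)
            (f.hom ⟨0, Nat.succ_pos _⟩)))
      (B.conn ≫ S.functor.map biprod.inr)

end DAngle

/-- A `(d+2)`-angulated category in the sense of Geiss–Keller–Oppermann: an additive
category `C` together with a `d`-suspension automorphism `S` and a class of distinguished
`(d+2)`-angles satisfying the axioms (N1)–(N4). -/
class DAngulated (C : Type u) [Category.{v} C] [Preadditive C] [HasZeroObject C]
    [HasFiniteBiproducts C] (S : C ≌ C) (d : ℕ) where
  distinguished : Set (DAngle C S d)
  /-- (N1)(a): closure under isomorphisms. -/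
  mem_of_iso : ∀ {A B : DAngle C S d} (f : DAngle.Hom A B), f.IsIso →
      A ∈ distinguished → B ∈ distinguished
  /-- (N1)(a): closure under direct sums. -/
  sum_mem : ∀ {A B : DAngle C S d}, A ∈ distinguished → B ∈ distinguished →
      A.sum B ∈ distinguished
  /-- (N1)(a): closure under direct summands. -/
  mem_of_sum_mem : ∀ {A B : DAngle C S d}, A.sum B ∈ distinguished → A ∈ distinguished
  /-- (N1)(b): the trivial angles are distinguished. -/
  trivial_mem : ∀ X : C, DAngle.trivial S d X ∈ distinguished
  /-- (N1)(c): every morphism extends to a distinguished angle. -/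
  extend : ∀ {X Y : C} (f : X ⟶ Y), ∃ A ∈ distinguished,
      ∃ (h0 : A.obj ⟨0, Nat.succ_pos _⟩ = X) (h1 : A.obj ⟨1, by omega⟩ = Y),
        A.mor ⟨0, Nat.succ_pos _⟩ = eqToHom h0 ≫ f ≫ eqToHom h1.symm
  /-- (N2): rotation. -/
  rotate_mem_iff : ∀ A : DAngle C S d, A ∈ distinguished ↔ A.rotate ∈ distinguished
  /-- (N3): completion of commutative squares to morphisms of angles. -/
  complete : ∀ {A B : DAngle C S d}, A ∈ distinguished → B ∈ distinguished →
      ∀ (φ₀ : A.obj ⟨0, Nat.succ_pos _⟩ ⟶ B.obj ⟨0, Nat.succ_pos _⟩)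
        (φ₁ : A.obj ⟨1, by omega⟩ ⟶ B.obj ⟨1, by omega⟩),
        A.mor ⟨0, Nat.succ_pos _⟩ ≫ φ₁ = φ₀ ≫ B.mor ⟨0, Nat.succ_pos _⟩ →
        ∃ f : DAngle.Hom A B, f.hom ⟨0, Nat.succ_pos _⟩ = φ₀ ∧ f.hom ⟨1, by omega⟩ = φ₁
  /-- (N4): the completion can be chosen so that the mapping cone is distinguished. -/
  cone_mem : ∀ {A B : DAngle C S d}, A ∈ distinguished → B ∈ distinguished →
      ∀ (φ₀ : A.obj ⟨0, Nat.succ_pos _⟩ ⟶ B.obj ⟨0, Nat.succ_pos _⟩)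
        (φ₁ : A.obj ⟨1, by omega⟩ ⟶ B.obj ⟨1, by omega⟩),
        A.mor ⟨0, Nat.succ_pos _⟩ ≫ φ₁ = φ₀ ≫ B.mor ⟨0, Nat.succ_pos _⟩ →
        ∃ f : DAngle.Hom A B, f.hom ⟨0, Nat.succ_pos _⟩ = φ₀ ∧ f.hom ⟨1, by omega⟩ = φ₁ ∧
          DAngle.cone f ∈ distinguished

namespace DAngle

variable {n : ℕ} [Preadditive C] [HasZeroObject C] [HasFiniteBiproducts C]

/-- The object sequence `X₀, …, X_n, P, Q` of length `n + 3`. -/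
noncomputable def mkObj (X : Fin (n + 1) → C) (P Q : C) : Fin (n + 3) → C :=
  Fin.snoc (Fin.snoc X P) Q

lemma mkObj_lt (X : Fin (n + 1) → C) (P Q : C) (j : Fin (n + 3)) (h : (j : ℕ) < n + 1) :
    mkObj X P Q j = X ⟨j, h⟩ := by
  rcases j with ⟨j, hj⟩
  replace h : j < n + 1 := h
  have h2 : j < n + 2 := by omega
  simp [mkObj, Fin.snoc, h, h2]

lemma mkObj_mid (X : Fin (n + 1) → C) (P Q : C) (j : Fin (n + 3)) (h : (j : ℕ) = n + 1) :
    mkObj X P Q j = P := by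
  rcases j with ⟨j, hj⟩
  subst h
  simp [mkObj, Fin.snoc]

lemma mkObj_last (X : Fin (n + 1) → C) (P Q : C) (j : Fin (n + 3)) (h : (j : ℕ) = n + 2) :
    mkObj X P Q j = Q := by
  rcases j with ⟨j, hj⟩
  subst h
  simp [mkObj, Fin.snoc]

/-- The `(n+3)`-`Σ`-sequence `X₀ → X₁ → ⋯ → X_n → P → Q → Σ X₀` assembled from its data. -/
noncomputable def mk' (S : C ≌ C) (X : Fin (n + 1) → C)
    (f : ∀ i : Fin n, X i.castSucc ⟶ X i.succ) (P Q : C)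
    (u : X ⟨n, Nat.lt_succ_self _⟩ ⟶ P) (w : P ⟶ Q)
    (z : Q ⟶ S.functor.obj (X ⟨0, Nat.succ_pos _⟩)) : DAngle C S (n + 1) where
  obj := mkObj X P Q
  mor i :=
    if h : (i : ℕ) < n then
      eqToHom (mkObj_lt X P Q i.castSucc (by simp only [Fin.coe_castSucc]; omega)) ≫
        f ⟨(i : ℕ), h⟩ ≫
        eqToHom (mkObj_lt X P Q i.succ (by simp only [Fin.val_succ]; omega)).symm
    else if h2 : (i : ℕ) = n then
      eqToHom (by
        rw [mkObj_lt X P Q i.castSucc (by simp only [Fin.coe_castSucc]; omega)]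
        congr 1
        ext
        simpa using h2) ≫ u ≫
        eqToHom (mkObj_mid X P Q i.succ (by simp only [Fin.val_succ]; omega)).symm
    else
      eqToHom (mkObj_mid X P Q i.castSucc (by simp only [Fin.coe_castSucc]; omega)) ≫ w ≫
        eqToHom (mkObj_last X P Q i.succ (by simp only [Fin.val_succ]; omega)).symm
  conn :=
    eqToHom (mkObj_last X P Q _ rfl) ≫ z ≫
      eqToHom (congrArg S.functor.obj (mkObj_lt X P Q ⟨0, Nat.succ_pos _⟩ (Nat.succ_pos n)).symm)

end DAngle

/-! Maps out of a distinguished angle are weakly exact: a map `φ` out of the second object that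
kills the first morphism factors through the second morphism. For the first position this is (N3)
applied against the angle `0 → L = L → 0 → ⋯ → 0`, which is distinguished because its rotation is
isomorphic to the trivial angle on `L`; rotation moves any other position to the first one.
Applied at `L ⊞ M` to `φ = biprod.fst`, which kills `(0, v)`, this yields `r : N ⟶ L` with
`(c, e) ≫ r = biprod.fst`, hence `c ≫ r = 𝟙 L`. -/

namespace DAngle

variable {S : C ≌ C} {d : ℕ} [Preadditive C]

lemma rotate_obj (A : DAngle C S d) (i : ℕ) (hi : i + 1 < d + 2) :
    A.rotate.obj ⟨i, by omega⟩ = A.obj ⟨i + 1, hi⟩ :=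
  A.objS_eq_of_lt (Fin.succ ⟨i, _⟩) hi

lemma rotate_mor (A : DAngle C S d) (i : ℕ) (hi : i + 1 < d + 1) :
    A.rotate.mor ⟨i, by omega⟩ =
      eqToHom (A.rotate_obj i (by omega)) ≫ A.mor ⟨i + 1, hi⟩ ≫
        eqToHom (A.rotate_obj (i + 1) (by omega)).symm := by
  change A.morS (Fin.succ ⟨i, _⟩) = _
  exact dif_pos hi

variable [HasZeroObject C]

noncomputable def idStalk (S : C ≌ C) (d : ℕ) (L : C) : DAngle C S d where
  obj i := if (i : ℕ) = 1 ∨ (i : ℕ) = 2 then L else 0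
  mor i := if h : (i : ℕ) = 1 then eqToHom (by simp [h]) else 0
  conn := 0

lemma idStalk_obj (L : C) (i : ℕ) (hi : i < d + 2) (h : i = 1 ∨ i = 2) :
    (idStalk S d L).obj ⟨i, hi⟩ = L :=
  if_pos h

lemma isZero_idStalk_obj (L : C) (i : ℕ) (hi : i < d + 2) (h : ¬(i = 1 ∨ i = 2)) :
    IsZero ((idStalk S d L).obj ⟨i, hi⟩) := by
  change IsZero (ite _ _ _)
  rw [if_neg h]
  exact isZero_zero C

lemma isZero_trivial_obj (X : C) (i : Fin (d + 2)) (hi : 2 ≤ (i : ℕ)) :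
    IsZero ((trivial S d X).obj i) := by
  change IsZero (ite _ _ _)
  rw [if_neg (by omega)]
  exact isZero_zero C

lemma isZero_idStalk_rotate_obj (L : C) (i : Fin (d + 2)) (hi : 2 ≤ (i : ℕ)) :
    IsZero ((idStalk S d L).rotate.obj i) := by
  obtain ⟨i, hid⟩ := i
  change 2 ≤ i at hi
  by_cases hlt : i + 1 < d + 2
  · rw [rotate_obj _ i hlt]
    exact isZero_idStalk_obj L _ _ (by omega)
  · change IsZero (objS _ (Fin.succ ⟨i, hid⟩))
    rw [objS_eq_of_eq _ _ (by simp; omega)]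
    exact S.functor.map_isZero (isZero_idStalk_obj L 0 _ (by omega))

lemma trivial_obj_eq_idStalk_rotate_obj (hd : 1 ≤ d) (L : C) (i : Fin (d + 2)) (hi : (i : ℕ) ≤ 1) :
    (trivial S d L).obj i = (idStalk S d L).rotate.obj i :=
  (if_pos hi).trans ((rotate_obj _ i (by omega)).trans (idStalk_obj L _ _ (by omega))).symm

variable (S) in
noncomputable def trivialHomIdStalkRotate (hd : 1 ≤ d) (L : C) :
    Hom (trivial S d L) (idStalk S d L).rotate where
  hom i :=
    if h : (i : ℕ) ≤ 1 then
      eqToHom (trivial_obj_eq_idStalk_rotate_obj hd L i h)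
    else 0
  comm := by
    rintro ⟨i, hi⟩
    rcases Nat.eq_zero_or_pos i with rfl | hpos
    · rw [rotate_mor _ 0 (by omega)]
      simp [trivial, idStalk]
      repeat erw [eqToHom_trans]
    · exact (isZero_idStalk_rotate_obj L _ (by simp; omega)).eq_of_tgt _ _
  comm_conn := (isZero_trivial_obj L _ (by simp; omega)).eq_of_src _ _

lemma trivialHomIdStalkRotate_isIso (hd : 1 ≤ d) (L : C) :
    (trivialHomIdStalkRotate S hd L).IsIso := by
  intro i
  dsimp only [trivialHomIdStalkRotate]
  split_ifs with h
  · exact inferInstanceAs (IsIso (eqToHom (trivial_obj_eq_idStalk_rotate_obj hd L i h)))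
  · exact (isZero_trivial_obj L i (by omega)).isIso (isZero_idStalk_rotate_obj L i (by omega)) _

variable [HasFiniteBiproducts C] [DAngulated C S d]

lemma idStalk_mem (hd : 1 ≤ d) (L : C) : idStalk S d L ∈ DAngulated.distinguished := by
  rw [DAngulated.rotate_mem_iff]
  exact DAngulated.mem_of_iso _ (trivialHomIdStalkRotate_isIso hd L) (DAngulated.trivial_mem L)

lemma yoneda_exact_zero {A : DAngle C S d} (hA : A ∈ DAngulated.distinguished) (hd : 1 ≤ d)
    {L : C} (φ : A.obj ⟨1, by omega⟩ ⟶ L) (hφ : A.mor ⟨0, by omega⟩ ≫ φ = 0) :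
    ∃ r : A.obj ⟨2, by omega⟩ ⟶ L, φ = A.mor ⟨1, by omega⟩ ≫ r := by
  have h₁ := idStalk_obj (S := S) (d := d) L 1 (by omega) (by simp)
  have h₂ := idStalk_obj (S := S) (d := d) L 2 (by omega) (by simp)
  obtain ⟨g, -, hg₁⟩ := DAngulated.complete hA (idStalk_mem hd L) 0 (φ ≫ eqToHom h₁.symm)
    (by rw [reassoc_of% hφ, zero_comp, zero_comp])
  refine ⟨g.hom ⟨2, by omega⟩ ≫ eqToHom h₂, ?_⟩
  have hcomm : A.mor ⟨1, _⟩ ≫ g.hom ⟨2, _⟩ = g.hom ⟨1, _⟩ ≫ (idStalk S d L).mor ⟨1, _⟩ :=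
    g.comm ⟨1, by omega⟩
  rw [reassoc_of% hcomm, hg₁]
  simp [idStalk]
  exact (Category.comp_id φ).symm

lemma yoneda_exact {A : DAngle C S d} (hA : A ∈ DAngulated.distinguished) (i : ℕ)
    (hi : i + 1 < d + 1) {L : C} (φ : A.obj ⟨i + 1, by omega⟩ ⟶ L)
    (hφ : A.mor ⟨i, by omega⟩ ≫ φ = 0) :
    ∃ r : A.obj ⟨i + 2, by omega⟩ ⟶ L, φ = A.mor ⟨i + 1, hi⟩ ≫ r := by
  induction i generalizing A with
  | zero => exact yoneda_exact_zero hA (by omega) φ hφ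
  | succ i ih =>
    obtain ⟨r, hr⟩ := ih ((DAngulated.rotate_mem_iff A).mp hA) (by omega)
      (eqToHom (A.rotate_obj (i + 1) (by omega)) ≫ φ)
      (by simpa [A.rotate_mor i (by omega)] using hφ)
    refine ⟨eqToHom (A.rotate_obj (i + 2) (by omega)).symm ≫ r, ?_⟩
    rw [A.rotate_mor (i + 1) hi] at hr
    simpa [cancel_epi] using hr

section mk'

variable {n : ℕ} (S : C ≌ C) (X : Fin (n + 1) → C) (f : ∀ i : Fin n, X i.castSucc ⟶ X i.succ)
  {P Q : C} (u : X ⟨n, Nat.lt_succ_self _⟩ ⟶ P) (w : P ⟶ Q)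
  (z : Q ⟶ S.functor.obj (X ⟨0, Nat.succ_pos _⟩))

lemma mk'_obj_castSucc_self :
    (mk' S X f P Q u w z).obj (Fin.castSucc ⟨n, by omega⟩) = X ⟨n, by omega⟩ :=
  mkObj_lt X P Q _ (Nat.lt_succ_self n)

lemma mk'_obj_mid : (mk' S X f P Q u w z).obj ⟨n + 1, by omega⟩ = P :=
  mkObj_mid X P Q _ rfl

lemma mk'_obj_last : (mk' S X f P Q u w z).obj ⟨n + 2, by omega⟩ = Q :=
  mkObj_last X P Q _ rfl

lemma mk'_mor_self_comp :
    (mk' S X f P Q u w z).mor ⟨n, by omega⟩ ≫ eqToHom (mk'_obj_mid S X f u w z) =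
      eqToHom (mk'_obj_castSucc_self S X f u w z) ≫ u := by
  dsimp only [mk']
  rw [dif_neg (lt_irrefl n), dif_pos rfl, Category.assoc, Category.assoc]
  erw [eqToHom_trans, eqToHom_refl, Category.comp_id]

lemma eqToHom_comp_mk'_mor_succ :
    eqToHom (mk'_obj_mid S X f u w z).symm ≫ (mk' S X f P Q u w z).mor ⟨n + 1, by omega⟩ =
      w ≫ eqToHom (mk'_obj_last S X f u w z).symm := by
  dsimp only [mk']
  rw [dif_neg (by omega), dif_neg (by omega)]
  erw [eqToHom_trans_assoc, eqToHom_refl, Category.id_comp]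

end mk'

end DAngle

/-- Let `C` be a `(d+2)`-angulated category (here `d = n + 1 ≥ 1`) and
`A₀ → A₁ → ⋯ → A_{d-1} →⁽⁰ᵛ⁾ L ⊞ M →⁽ᶜ ᵈ⁾ N → Σᵈ A₀` a `(d+2)`-angle in which the
component `A_{d-1} ⟶ L` of the map into `L ⊞ M` is zero. Then the component
`c : L ⟶ N` of the map out of `L ⊞ M` is a split monomorphism. -/
theorem component_isSplitMono_of_fst_eq_zero {C : Type u} [Category.{v} C] [Preadditive C]
    [HasZeroObject C] [HasFiniteBiproducts C] {S : C ≌ C} {n : ℕ} [DAngulated C S (n + 1)]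
    (X : Fin (n + 1) → C) (f : ∀ i : Fin n, X i.castSucc ⟶ X i.succ) (L M N : C)
    (v : X ⟨n, Nat.lt_succ_self _⟩ ⟶ M) (c : L ⟶ N) (e : M ⟶ N)
    (h : N ⟶ S.functor.obj (X ⟨0, Nat.succ_pos _⟩))
    (hA : DAngle.mk' S X f (L ⊞ M) N (biprod.lift 0 v) (biprod.desc c e) h ∈
      DAngulated.distinguished (S := S) (d := n + 1)) :
    IsSplitMono c := by
  obtain ⟨r, hr⟩ := DAngle.yoneda_exact hA n (by omega)
    (eqToHom (DAngle.mk'_obj_mid S X f _ _ h) ≫ biprod.fst)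
    (by rw [reassoc_of% DAngle.mk'_mor_self_comp S X f _ _ h]; simp)
  have hr' := eqToHom (DAngle.mk'_obj_mid S X f _ _ h).symm ≫= hr
  rw [reassoc_of% DAngle.eqToHom_comp_mk'_mor_succ S X f _ _ h] at hr'
  exact ⟨⟨eqToHom (DAngle.mk'_obj_last S X f _ _ h).symm ≫ r,
    by simpa using (biprod.inl ≫= hr').symm⟩⟩
end

section
/- Let C be a triangulated category and A → L ⊕ M →^{(c,d)} N → ΣA a distinguished triangle in which the component A → L of the first map is zero. Then the triangle is isomorphic to the direct sum of a distinguished triangle A → M → Q → ΣA with the contractible triangle 0 → L →^{1} L → 0. -/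
/-!
Complete `v` to a distinguished triangle `A → M → Q → A⟦1⟧`. Its direct sum with the
contractible triangle `0 → L → L → 0` is distinguished, being a product of two distinguished
triangles, and its first morphism `A ⊞ 0 → M ⊞ L` is isomorphic, as an arrow, to
`(0, v) : A → L ⊞ M`. Distinguished triangles on isomorphic arrows are isomorphic.
-/

open CategoryTheory CategoryTheory.Limits CategoryTheory.Pretriangulated ZeroObject

variable {C : Type u} [Category.{v} C] [Preadditive C] [HasZeroObject C] [HasShift C ℤ]
  [∀ n : ℤ, (shiftFunctor C n).Additive] [Pretriangulated C] [HasBinaryBiproducts C]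

/-- The componentwise direct sum of two triangles. -/
noncomputable def sumTriangle (T₁ T₂ : Triangle C) : Triangle C :=
  Triangle.mk (biprod.map T₁.mor₁ T₂.mor₁) (biprod.map T₁.mor₂ T₂.mor₂)
    (biprod.desc (T₁.mor₃ ≫ (shiftFunctor C (1 : ℤ)).map biprod.inl)
      (T₂.mor₃ ≫ (shiftFunctor C (1 : ℤ)).map biprod.inr))

noncomputable def biprodIsoPi {D : Type*} [Category D] [HasZeroMorphisms D]
    (f : WalkingPair → D) [HasBinaryBiproduct (f .left) (f .right)] [HasProduct f] :
    f .left ⊞ f .right ≅ ∏ᶜ f where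
  hom := Pi.lift fun
    | .left => biprod.fst
    | .right => biprod.snd
  inv := biprod.lift (Pi.π f .left) (Pi.π f .right)
  inv_hom_id := Pi.hom_ext _ _ fun j => by rcases j with _ | _ <;> simp

lemma sumTriangle_distinguished (T₁ T₂ : Triangle C)
    (h₁ : T₁ ∈ distTriang C) (h₂ : T₂ ∈ distTriang C) :
    sumTriangle T₁ T₂ ∈ distTriang C := by
  let T : WalkingPair → Triangle C := fun
    | .left => T₁
    | .right => T₂
  have hT : ∀ j, T j ∈ distTriang C := by rintro (_ | _) <;> assumption
  refine isomorphic_distinguished _ (productTriangle_distinguished T hT) _ <|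
    Triangle.isoMk _ _ (biprodIsoPi fun j => (T j).obj₁) (biprodIsoPi fun j => (T j).obj₂)
      (biprodIsoPi fun j => (T j).obj₃) ?_ ?_ ?_
  all_goals dsimp only [sumTriangle, productTriangle, Triangle.mk]
  · exact Pi.hom_ext _ _ fun j => by rcases j with _ | _ <;> simp [biprodIsoPi, T]
  · exact Pi.hom_ext _ _ fun j => by rcases j with _ | _ <;> simp [biprodIsoPi, T]
  · dsimp only [biprodIsoPi]
    rw [← cancel_mono (piComparison (shiftFunctor C (1 : ℤ)) fun j => (T j).obj₁)]
    simp only [Category.assoc, IsIso.inv_hom_id, Category.comp_id]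
    refine Pi.hom_ext _ _ fun j => ?_
    rcases j with _ | _ <;> ext <;> simp [T, ← Functor.map_comp]

noncomputable def biprodLiftZeroArrowIso {D : Type*} [Category D] [HasZeroMorphisms D]
    [HasZeroObject D] [HasBinaryBiproducts D] (A L M : D) (v : A ⟶ M) :
    Arrow.mk (biprod.lift (0 : A ⟶ L) v) ≅ Arrow.mk (biprod.map v (0 : (0 : D) ⟶ L)) :=
  Arrow.isoMk (isoBiprodZero (isZero_zero D)) (biprod.braiding L M) (by dsimp; ext <;> simp)

/-- Let `C` be a triangulated category and `A → L ⊞ M →⁽ᶜ ᵈ⁾ N → ΣA` a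
distinguished triangle in which the component `A ⟶ L` of the first map is zero. Then the
triangle is isomorphic to the direct sum of a distinguished triangle `A → M → Q → ΣA`
with the contractible triangle `0 → L →¹ L → 0`. -/
theorem triangle_isoSumTrivial_of_fst_eq_zero (A L M N : C) (v : A ⟶ M) (c : L ⟶ N)
    (e : M ⟶ N) (h : N ⟶ A⟦(1 : ℤ)⟧)
    (hT : Triangle.mk (biprod.lift (0 : A ⟶ L) v) (biprod.desc c e) h ∈ (distTriang C)) :
    ∃ (Q : C) (t : M ⟶ Q) (z : Q ⟶ A⟦(1 : ℤ)⟧),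
      Triangle.mk v t z ∈ (distTriang C) ∧
      Nonempty (Triangle.mk (biprod.lift (0 : A ⟶ L) v) (biprod.desc c e) h ≅
        sumTriangle (Triangle.mk v t z)
          (Triangle.mk (0 : (0 : C) ⟶ L) (𝟙 L) (0 : L ⟶ (0 : C)⟦(1 : ℤ)⟧))) := by
  obtain ⟨Q, t, z, hQ⟩ := distinguished_cocone_triangle v
  have hS := sumTriangle_distinguished _ _ hQ (contractible_distinguished₁ L)
  obtain ⟨iso, -⟩ := exists_iso_of_arrow_iso _ _ hT hS (biprodLiftZeroArrowIso A L M v)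
  exact ⟨Q, t, z, hQ, ⟨iso⟩⟩
end

section
/- Let C be a k-linear Hom-finite Krull–Schmidt (d+2)-angulated category and A_• : A_0 →^{α_0} A_1 → ⋯ → A_{d+1} → Σ^d A_0 an Auslander–Reiten (d+2)-angle. For an indecomposable object U of C, the induced map Hom_C(U, A_0) → Hom_C(U, A_1) is injective if and only if U is not isomorphic to Σ^{-d} A_{d+1}. -/
open CategoryTheory CategoryTheory.Limits ZeroObject

universe v u

variable (C : Type u) [Category.{v} C]

attribute [local instance] CategoryTheory.Limits.hasBinaryBiproducts_of_finite_biproducts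

variable {C}

section RepTheory

variable (C)
variable [Preadditive C]

/-- A morphism lies in the Jacobson radical of the category. -/
def IsRadicalHom {A B : C} (f : A ⟶ B) : Prop :=
  ∀ g : B ⟶ A, IsIso (𝟙 A - f ≫ g)

/-- `RadComp C n f` says that `f` is a composite of `n` radical morphisms; sums of such
morphisms span the `n`-th power `rad_C^n` of the radical. -/
inductive RadComp : ℕ → ∀ {A B : C}, (A ⟶ B) → Prop
  | single {A B : C} (f : A ⟶ B) : IsRadicalHom C f → RadComp 1 f
  | comp {n : ℕ} {A B D : C} (f : A ⟶ B) (g : B ⟶ D) :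
      RadComp n f → IsRadicalHom C g → RadComp (n + 1) (f ≫ g)

variable [HasZeroObject C] [HasFiniteBiproducts C]

/-- An object is indecomposable if it is non-zero and admits no non-trivial direct sum
decomposition. -/
def Indecomposable (X : C) : Prop :=
  ¬ IsZero X ∧ ∀ Y Z : C, Nonempty (X ≅ Y ⊞ Z) → IsZero Y ∨ IsZero Z

/-- A category is locally finite if for every indecomposable `X` there are, up to
isomorphism, only finitely many indecomposables `Y` with `Hom(X, Y) ≠ 0`, and only
finitely many indecomposables `Y` with `Hom(Y, X) ≠ 0`. -/
def IsLocallyFinite : Prop :=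
  ∀ X : C, Indecomposable C X →
    (∃ L : List C, ∀ Y : C, Indecomposable C Y → (∃ f : X ⟶ Y, f ≠ 0) →
      ∃ Z ∈ L, Nonempty (Y ≅ Z)) ∧
    (∃ L : List C, ∀ Y : C, Indecomposable C Y → (∃ f : Y ⟶ X, f ≠ 0) →
      ∃ Z ∈ L, Nonempty (Y ≅ Z))

/-- A morphism is left almost split if it is not a split monomorphism and every
non-split-monomorphism out of its source factors through it. -/
def IsLeftAlmostSplit {A B : C} (f : A ⟶ B) : Prop :=
  ¬ IsSplitMono f ∧ ∀ ⦃X : C⦄ (g : A ⟶ X), ¬ IsSplitMono g → ∃ h : B ⟶ X, f ≫ h = g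

/-- A morphism is right almost split if it is not a split epimorphism and every
non-split-epimorphism into its target factors through it. -/
def IsRightAlmostSplit {A B : C} (f : A ⟶ B) : Prop :=
  ¬ IsSplitEpi f ∧ ∀ ⦃X : C⦄ (g : X ⟶ B), ¬ IsSplitEpi g → ∃ h : X ⟶ A, h ≫ f = g

/-- A morphism `f : X ⟶ Y` is right minimal if any `g` with `g ≫ f = f` is an
automorphism. -/
def IsRightMinimal {X Y : C} (f : X ⟶ Y) : Prop :=
  ∀ g : X ⟶ X, g ≫ f = f → IsIso g

/-- A morphism `f : X ⟶ Y` is left minimal if any `g` with `f ≫ g = f` is an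
automorphism. -/
def IsLeftMinimal {X Y : C} (f : X ⟶ Y) : Prop :=
  ∀ g : Y ⟶ Y, f ≫ g = f → IsIso g

/-- An Auslander–Reiten `(d+2)`-angle: the first morphism is left almost split, the last
one is right almost split, and the intermediate morphisms lie in the radical. -/
def DAngle.IsAR {S : C ≌ C} {d : ℕ} (A : DAngle C S d) : Prop :=
  IsLeftAlmostSplit C (A.mor ⟨0, Nat.succ_pos _⟩) ∧
  IsRightAlmostSplit C (A.mor ⟨d, Nat.lt_succ_self _⟩) ∧
  ∀ i : Fin (d + 1), 0 < (i : ℕ) → (i : ℕ) < d → IsRadicalHom C (A.mor i)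

end RepTheory

/-- A Serre functor on a `k`-linear Hom-finite category: an autoequivalence `S` with
functorial isomorphisms `Hom(X, Y) ≅ D Hom(Y, S X)`. -/
structure SerreFunctor (k : Type*) [Field k] (C : Type u) [Category.{v} C] [Preadditive C]
    [Linear k C] where
  equiv : C ≌ C
  homEquiv : ∀ X Y : C, (X ⟶ Y) ≃ₗ[k] Module.Dual k (Y ⟶ equiv.functor.obj X)
  nat_left : ∀ {X X' Y : C} (u : X' ⟶ X) (g : X ⟶ Y) (t : Y ⟶ equiv.functor.obj X'),
      homEquiv X' Y (u ≫ g) t = homEquiv X Y g (t ≫ equiv.functor.map u)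
  nat_right : ∀ {X Y Y' : C} (g : X ⟶ Y) (v : Y ⟶ Y') (t : Y' ⟶ equiv.functor.obj X),
      homEquiv X Y' (g ≫ v) t = homEquiv X Y g (v ≫ t)

/-!
Applying `Hom(U, -)` to a distinguished `(d+2)`-angle gives a long exact sequence. Its first two
steps come from comparing the angle, via (N3), with the trivial angle and its rotation; rotating
moves every other step to the front. Exactness at `Σᵈ A₀` turns injectivity of `Hom(U, α₀)` into
the vanishing of `t ≫ conn` for every `t : Σᵈ U ⟶ A_{d+1}`. A non-split `t` factors through the
right almost split `α_d`, and `α_d ≫ conn = 0`. A split `t` makes `Σ⁻ᵈ A_{d+1}` a direct summand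
of the indecomposable `U`, hence isomorphic to it (it is non-zero, since `α_d` does not split).
Conversely, if `Σᵈ U ≅ A_{d+1}` then `conn = 0`, and exactness at `A_{d+1}` splits `α_d`.
-/

lemma CategoryTheory.Functor.exists_comp_eq_of_map_eq_comp {D : Type*} [Category D] (F : C ⥤ D)
    [F.Full] [F.Faithful] {X Y Z : C} {u : X ⟶ Z} {m : Y ⟶ Z} (g : F.obj X ⟶ F.obj Y)
    (h : F.map u = g ≫ F.map m) : ∃ w : X ⟶ Y, w ≫ m = u :=
  ⟨F.preimage g, F.map_injective (by rw [F.map_comp, F.map_preimage, h])⟩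

section Indecomposable

variable [Preadditive C] [HasFiniteBiproducts C] [IsIdempotentComplete C]

lemma Indecomposable.isZero_or_isIso_of_isSplitEpi {U Y : C} (hU : Indecomposable C U)
    (p : U ⟶ Y) [IsSplitEpi p] : IsZero Y ∨ IsIso p := by
  obtain ⟨Z, i, r, hir, hri⟩ := IsIdempotentComplete.idempotents_split U (𝟙 U - p ≫ section_ p)
    (Idempotents.idem_of_id_sub_idem _ (by simp))
  have hsr : section_ p ≫ r = 0 := by
    calc section_ p ≫ r = section_ p ≫ (r ≫ i) ≫ r := by simp [hir]
      _ = 0 := by simp [hri]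
  have hip : i ≫ p = 0 := by
    calc i ≫ p = i ≫ (r ≫ i) ≫ p := by simp [reassoc_of% hir]
      _ = 0 := by simp [hri]
  let b : BinaryBicone Y Z := ⟨U, p, r, section_ p, i, IsSplitEpi.id p, hsr, hip, hir⟩
  have hb : b.IsBilimit := isBinaryBilimitOfTotal b (by simp [b, hri])
  refine (hU.2 Y Z ⟨biprod.uniqueUpToIso Y Z hb⟩).imp id fun hZ => ⟨section_ p, ?_, IsSplitEpi.id p⟩
  rw [eq_comm, ← sub_eq_zero, ← hri, hZ.eq_of_tgt r 0, zero_comp]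

lemma Indecomposable.isZero_or_nonempty_iso_inverse_of_isSplitEpi {D : Type*} [Category D]
    [Preadditive D] {U : C} {Y : D} (hU : Indecomposable C U) (e : C ≌ D)
    (t : e.functor.obj U ⟶ Y) [IsSplitEpi t] : IsZero Y ∨ Nonempty (U ≅ e.inverse.obj Y) := by
  rcases hU.isZero_or_isIso_of_isSplitEpi (e.unit.app U ≫ e.inverse.map t) with hZ | hiso
  · exact .inl ((e.functor.map_isZero hZ).of_iso (e.counitIso.app Y).symm)
  · exact .inr ⟨@asIso _ _ _ _ _ hiso⟩

end Indecomposable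

namespace DAngle

variable {S : C ≌ C} {d : ℕ}

section

lemma morS_of_lt (A : DAngle C S d) (i : Fin (d + 2)) (h : (i : ℕ) < d + 1) :
    A.morS i = eqToHom (A.objS_eq_of_lt i.castSucc (by simp)) ≫
      A.mor ⟨i, h⟩ ≫ eqToHom (A.objS_eq_of_lt i.succ (by simpa using h)).symm :=
  dif_pos h

lemma morS_of_not_lt (A : DAngle C S d) (i : Fin (d + 2)) (h : ¬ (i : ℕ) < d + 1) :
    A.morS i = eqToHom ((A.objS_eq_of_lt i.castSucc (by simp)).trans
        (congrArg A.obj (Fin.ext (by simp; omega)))) ≫ A.conn ≫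
      eqToHom (A.objS_eq_of_eq i.succ (by simp; omega)).symm :=
  dif_neg h

/- At small indices the `eqToHom`s are identities only up to unfolding `Fin.snoc` and `Fin.succ`,
which `simp` does not see; hence the `erw`s here and below. -/
lemma morS_zero (A : DAngle C S d) : A.morS ⟨0, by omega⟩ = A.mor ⟨0, Nat.succ_pos _⟩ := by
  rw [morS_of_lt A _ (Nat.succ_pos _)]
  erw [eqToHom_refl, eqToHom_refl, Category.id_comp, Category.comp_id]

lemma morS_one (A : DAngle C S (d + 1)) : A.morS ⟨1, by omega⟩ = A.mor ⟨1, by omega⟩ := by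
  rw [morS_of_lt A _ (by simp)]
  erw [eqToHom_refl, eqToHom_refl, Category.id_comp, Category.comp_id]

lemma morS_one_of_eq_zero (A : DAngle C S 0) : A.morS ⟨1, by omega⟩ = A.conn := by
  rw [morS_of_not_lt A _ (by simp)]
  erw [eqToHom_refl, eqToHom_refl, Category.id_comp, Category.comp_id]

variable [Preadditive C]

lemma rotate_objS (A : DAngle C S d) (m : ℕ) (hm : m < d + 2) :
    A.rotate.objS ⟨m, by omega⟩ = A.objS ⟨m + 1, by omega⟩ :=
  A.rotate.objS_eq_of_lt ⟨m, by omega⟩ hm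

lemma rotate_morS_of_lt (A : DAngle C S d) (n : ℕ) (hn : n < d + 1) :
    A.rotate.morS ⟨n, by omega⟩ = eqToHom (A.rotate_objS n (by omega)) ≫
      A.morS ⟨n + 1, by omega⟩ ≫ eqToHom (A.rotate_objS (n + 1) (by omega)).symm :=
  A.rotate.morS_of_lt ⟨n, by omega⟩ hn

lemma rotate_obj_zero (A : DAngle C S d) :
    A.rotate.obj ⟨0, Nat.succ_pos _⟩ = A.obj ⟨1, by omega⟩ :=
  A.objS_eq_of_lt ⟨1, by omega⟩ (by simp)

lemma rotate_obj_last (A : DAngle C S d) :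
    A.rotate.obj ⟨d + 1, by omega⟩ = S.functor.obj (A.obj ⟨0, Nat.succ_pos _⟩) :=
  A.objS_eq_of_eq ⟨d + 2, by omega⟩ rfl

lemma rotate_conn (A : DAngle C S d) :
    A.rotate.conn = eqToHom A.rotate_obj_last ≫
      ((-1 : ℤ) ^ d • S.functor.map (A.mor ⟨0, Nat.succ_pos _⟩)) ≫
      eqToHom (congrArg S.functor.obj A.rotate_obj_zero.symm) :=
  rfl

variable [HasZeroObject C]

lemma trivial_obj_of_le (X : C) (i : Fin (d + 2)) (h : (i : ℕ) ≤ 1) :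
    (trivial S d X).obj i = X :=
  if_pos h

lemma trivial_mor_zero (X : C) :
    (trivial S d X).mor ⟨0, Nat.succ_pos _⟩ =
      eqToHom ((trivial_obj_of_le X _ (by simp)).trans (trivial_obj_of_le X _ le_rfl).symm) := by
  simp [trivial]

lemma trivial_mor_of_ne_zero (X : C) (i : Fin (d + 1)) (h : (i : ℕ) ≠ 0) :
    (trivial S d X).mor i = 0 :=
  dif_neg h

end

variable [Preadditive C] [HasZeroObject C] [HasFiniteBiproducts C] [DAngulated C S d]

lemma mor_zero_comp_morS_one_eq_zero (A : DAngle C S d) (hA : A ∈ DAngulated.distinguished) :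
    A.mor ⟨0, Nat.succ_pos _⟩ ≫ A.morS ⟨1, by omega⟩ = 0 := by
  let X := A.obj ⟨0, Nat.succ_pos _⟩
  have h0 : (trivial S d X).obj ⟨0, Nat.succ_pos _⟩ = X := trivial_obj_of_le X _ zero_le_one
  have h1 : (trivial S d X).obj ⟨1, by omega⟩ = X := trivial_obj_of_le X _ le_rfl
  obtain ⟨f, -, hf1⟩ := DAngulated.complete (DAngulated.trivial_mem X) hA (eqToHom h0)
    (eqToHom h1 ≫ A.mor ⟨0, Nat.succ_pos _⟩)
    (by rw [trivial_mor_zero]; exact eqToHom_trans_assoc _ _ _)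
  refine (cancel_epi (eqToHom h1)).mp (Eq.trans ?_ comp_zero.symm)
  cases d with
  | zero =>
    have hcomm : (0 : _ ⟶ S.functor.obj _) ≫ S.functor.map (f.hom ⟨0, Nat.succ_pos _⟩) =
        f.hom ⟨1, by omega⟩ ≫ A.conn := f.comm_conn
    rw [zero_comp, hf1, Category.assoc] at hcomm
    rw [morS_one_of_eq_zero]
    exact hcomm.symm
  | succ d =>
    have hcomm : (trivial S (d + 1) X).mor ⟨1, by omega⟩ ≫ f.hom ⟨2, by omega⟩ =
        f.hom ⟨1, by omega⟩ ≫ A.mor ⟨1, by omega⟩ := f.comm ⟨1, by omega⟩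
    rw [trivial_mor_of_ne_zero X _ one_ne_zero, zero_comp, hf1, Category.assoc] at hcomm
    rw [morS_one]
    exact hcomm.symm

/- The morphism from the rotated trivial angle `Y → 0 → ⋯ → 0 → Σᵈ Y → Σᵈ Y` with first
component `u` has a last square saying `Σᵈ u = g ≫ Σᵈ α₀`. -/
lemma coyoneda_exact_zero (A : DAngle C S d) (hA : A ∈ DAngulated.distinguished) {Y : C}
    (u : Y ⟶ A.obj ⟨1, by omega⟩) (hu : u ≫ A.morS ⟨1, by omega⟩ = 0) :
    ∃ w : Y ⟶ A.obj ⟨0, Nat.succ_pos _⟩, w ≫ A.mor ⟨0, Nat.succ_pos _⟩ = u := by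
  change Y ⟶ A.rotate.obj ⟨0, Nat.succ_pos _⟩ at u
  have hT0 : (trivial S d Y).rotate.obj ⟨0, Nat.succ_pos _⟩ = Y :=
    (trivial S d Y).rotate_obj_zero.trans (trivial_obj_of_le Y _ le_rfl)
  obtain ⟨f, hf0, -⟩ := DAngulated.complete
    ((DAngulated.rotate_mem_iff _).mp (DAngulated.trivial_mem Y))
    ((DAngulated.rotate_mem_iff A).mp hA) (eqToHom hT0 ≫ u) 0
    (by
      rw [comp_zero]
      exact ((eqToHom hT0 ≫= hu).trans comp_zero).symm.trans (Category.assoc _ _ _).symm)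
  have hcomm := f.comm_conn
  rw [rotate_conn, rotate_conn, hf0, trivial_mor_zero] at hcomm
  simp only [eqToHom_map, Functor.map_comp, Preadditive.comp_zsmul,
    Preadditive.zsmul_comp, Category.assoc, eqToHom_trans_assoc,
    (isUnit_neg_one.pow d).smul_left_cancel, eqToHom_comp_iff] at hcomm
  simp only [← Category.assoc] at hcomm
  erw [eqToHom_refl, Category.comp_id] at hcomm
  exact S.functor.exists_comp_eq_of_map_eq_comp _ hcomm

/- Rotation shifts the extended sequence one step to the left: this is the induction step here and
in `coyoneda_exact_morS`. -/
lemma morS_comp_morS_eq_zero (A : DAngle C S d) (hA : A ∈ DAngulated.distinguished) (n : ℕ)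
    (hn : n < d + 1) : A.morS ⟨n, by omega⟩ ≫ A.morS ⟨n + 1, by omega⟩ = 0 := by
  induction n generalizing A with
  | zero => rw [morS_zero]; exact mor_zero_comp_morS_one_eq_zero A hA
  | succ n ih =>
    have h := ih A.rotate ((DAngulated.rotate_mem_iff A).mp hA) (by omega)
    rw [rotate_morS_of_lt A n (by omega), rotate_morS_of_lt A (n + 1) hn] at h
    simp only [Category.assoc, eqToHom_trans_assoc, eqToHom_refl, Category.id_comp,
      Preadditive.IsIso.comp_left_eq_zero] at h
    rwa [← Category.assoc, Preadditive.IsIso.comp_right_eq_zero] at h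

lemma coyoneda_exact_morS (A : DAngle C S d) (hA : A ∈ DAngulated.distinguished) (n : ℕ)
    (hn : n < d + 1) {Y : C} (u : Y ⟶ A.objS ⟨n + 1, by omega⟩)
    (hu : u ≫ A.morS ⟨n + 1, by omega⟩ = 0) :
    ∃ w : Y ⟶ A.objS ⟨n, by omega⟩, w ≫ A.morS ⟨n, by omega⟩ = u := by
  induction n generalizing A Y with
  | zero => rw [morS_zero]; exact coyoneda_exact_zero A hA u hu
  | succ n ih =>
    obtain ⟨w, hw⟩ := ih A.rotate ((DAngulated.rotate_mem_iff A).mp hA) (by omega)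
      (u ≫ eqToHom (A.rotate_objS (n + 1) (by omega)).symm)
      (by simp [rotate_morS_of_lt A (n + 1) hn, reassoc_of% hu])
    refine ⟨w ≫ eqToHom (A.rotate_objS n (by omega)), ?_⟩
    rw [rotate_morS_of_lt A n (by omega)] at hw
    simpa using hw =≫ eqToHom (A.rotate_objS (n + 1) (by omega))

lemma mor_last_comp_conn_eq_zero (A : DAngle C S d) (hA : A ∈ DAngulated.distinguished) :
    A.mor ⟨d, d.lt_succ_self⟩ ≫ A.conn = 0 := by
  have h := A.morS_comp_morS_eq_zero hA d d.lt_succ_self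
  rw [morS_of_lt A ⟨d, _⟩ d.lt_succ_self, morS_of_not_lt A ⟨d + 1, _⟩ (lt_irrefl _)] at h
  simp only [Category.assoc, eqToHom_trans_assoc, Preadditive.IsIso.comp_left_eq_zero] at h
  erw [eqToHom_refl, Category.id_comp] at h
  rwa [← Category.assoc, Preadditive.IsIso.comp_right_eq_zero] at h

lemma coyoneda_exact_last (A : DAngle C S d) (hA : A ∈ DAngulated.distinguished) {X : C}
    (t : X ⟶ A.obj ⟨d + 1, d.succ.lt_succ_self⟩) (ht : t ≫ A.conn = 0) :
    ∃ w : X ⟶ A.obj ⟨d, by omega⟩, w ≫ A.mor ⟨d, d.lt_succ_self⟩ = t := by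
  have hobj : A.objS ⟨d + 1, by omega⟩ = A.obj ⟨d + 1, d.succ.lt_succ_self⟩ :=
    A.objS_eq_of_lt _ (Nat.lt_succ_self _)
  obtain ⟨w, hw⟩ := A.coyoneda_exact_morS hA d d.lt_succ_self (t ≫ eqToHom hobj.symm)
    (by
      simp only [morS_of_not_lt A ⟨d + 1, _⟩ (lt_irrefl _), Category.assoc, eqToHom_trans_assoc,
        eqToHom_refl, Category.id_comp]
      rw [reassoc_of% ht, zero_comp])
  refine ⟨w ≫ eqToHom (A.objS_eq_of_lt ⟨d, by omega⟩ (by simp)), ?_⟩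
  rw [morS_of_lt A ⟨d, _⟩ d.lt_succ_self] at hw
  simpa using hw =≫ eqToHom hobj

lemma conn_comp_map_mor_zero_eq_zero (A : DAngle C S d) (hA : A ∈ DAngulated.distinguished) :
    A.conn ≫ S.functor.map (A.mor ⟨0, Nat.succ_pos _⟩) = 0 := by
  have h := A.rotate.mor_last_comp_conn_eq_zero ((DAngulated.rotate_mem_iff A).mp hA)
  rw [rotate_conn] at h
  change A.morS ⟨d + 1, by omega⟩ ≫ _ = 0 at h
  rw [morS_of_not_lt A _ (lt_irrefl _)] at h
  erw [Category.assoc, Category.assoc, eqToHom_trans_assoc, eqToHom_refl, Category.id_comp] at h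
  simp only [Preadditive.IsIso.comp_left_eq_zero, Preadditive.comp_zsmul, Preadditive.zsmul_comp,
    (isUnit_neg_one.pow d).smul_eq_zero] at h
  rwa [← Category.assoc, Preadditive.IsIso.comp_right_eq_zero] at h

lemma coyoneda_exact_conn (A : DAngle C S d) (hA : A ∈ DAngulated.distinguished) {X : C}
    (g : X ⟶ S.functor.obj (A.obj ⟨0, Nat.succ_pos _⟩))
    (hg : g ≫ S.functor.map (A.mor ⟨0, Nat.succ_pos _⟩) = 0) :
    ∃ t : X ⟶ A.obj ⟨d + 1, d.succ.lt_succ_self⟩, t ≫ A.conn = g := by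
  obtain ⟨w, hw⟩ := A.rotate.coyoneda_exact_last ((DAngulated.rotate_mem_iff A).mp hA)
    (g ≫ eqToHom A.rotate_obj_last.symm) (by
      rw [rotate_conn]
      erw [Category.assoc, eqToHom_trans_assoc, eqToHom_refl, Category.id_comp]
      rw [Preadditive.zsmul_comp, Preadditive.comp_zsmul, reassoc_of% hg, zero_comp, smul_zero])
  change _ ≫ A.morS ⟨d + 1, by omega⟩ = _ at hw
  rw [morS_of_not_lt A _ (lt_irrefl _)] at hw
  refine ⟨w ≫ eqToHom (A.objS_eq_of_lt ⟨d + 1, by omega⟩ (Nat.lt_succ_self _)), ?_⟩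
  rw [← cancel_mono (eqToHom A.rotate_obj_last.symm), ← hw]
  simp only [Category.assoc]
  rfl

lemma isSplitEpi_mor_last_of_conn_eq_zero (A : DAngle C S d)
    (hA : A ∈ DAngulated.distinguished) (h : A.conn = 0) :
    IsSplitEpi (A.mor ⟨d, d.lt_succ_self⟩) := by
  obtain ⟨w, hw⟩ := A.coyoneda_exact_last hA (𝟙 _) (by rw [h, comp_zero])
  exact ⟨⟨w, hw⟩⟩

lemma injective_comp_mor_zero_iff (A : DAngle C S d) (hA : A ∈ DAngulated.distinguished)
    (U : C) :
    Function.Injective (fun g : U ⟶ A.obj ⟨0, Nat.succ_pos _⟩ => g ≫ A.mor ⟨0, Nat.succ_pos _⟩) ↔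
      ∀ t : S.functor.obj U ⟶ A.obj ⟨d + 1, d.succ.lt_succ_self⟩, t ≫ A.conn = 0 := by
  constructor
  · intro hinj t
    obtain ⟨g, hg⟩ := S.functor.map_surjective (t ≫ A.conn)
    have hg0 : g ≫ A.mor ⟨0, Nat.succ_pos _⟩ = 0 ≫ A.mor ⟨0, Nat.succ_pos _⟩ :=
      S.functor.map_injective (by
        rw [Functor.map_comp, hg, Category.assoc, A.conn_comp_map_mor_zero_eq_zero hA, comp_zero,
          zero_comp, Functor.map_zero])
    rw [← hg, hinj hg0, Functor.map_zero]
  · intro h g₁ g₂ hg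
    have hsub : (g₁ - g₂) ≫ A.mor ⟨0, Nat.succ_pos _⟩ = 0 := by
      rw [Preadditive.sub_comp, sub_eq_zero]
      exact hg
    obtain ⟨t, ht⟩ := A.coyoneda_exact_conn hA (S.functor.map (g₁ - g₂))
      (by rw [← Functor.map_comp, hsub, Functor.map_zero])
    exact sub_eq_zero.mp (S.functor.map_injective (by rw [← ht, h, Functor.map_zero]))

end DAngle

/-- Let `C` be a `k`-linear Hom-finite Krull–Schmidt `(d+2)`-angulated
category and `A_•` an Auslander–Reiten `(d+2)`-angle. For an indecomposable `U`, the
induced map `Hom(U, A₀) → Hom(U, A₁)` is injective iff `U ≇ Σ⁻ᵈ A_{d+1}`. -/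
theorem hom_injective_iff_not_iso_desuspension {C : Type u} [Category.{v} C]
    [Preadditive C] [HasZeroObject C] [HasFiniteBiproducts C]
    (k : Type*) [Field k] [Linear k C]
    [∀ X Y : C, FiniteDimensional k (X ⟶ Y)] [IsIdempotentComplete C]
    {S : C ≌ C} {d : ℕ} [DAngulated C S d]
    (A : DAngle C S d) (hA : A ∈ DAngulated.distinguished (S := S) (d := d))
    (hAR : A.IsAR C) (U : C) (hU : Indecomposable C U) :
    Function.Injective
        (fun g : U ⟶ A.obj ⟨0, Nat.succ_pos _⟩ => g ≫ A.mor ⟨0, Nat.succ_pos _⟩) ↔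
      ¬ Nonempty (U ≅ S.inverse.obj (A.obj ⟨d + 1, Nat.lt_succ_self _⟩)) := by
  obtain ⟨-, ⟨hnotSplit, hfactor⟩, -⟩ := hAR
  rw [A.injective_comp_mor_zero_iff hA U]
  constructor
  · rintro hconn ⟨e⟩
    let t : S.functor.obj U ≅ A.obj ⟨d + 1, _⟩ := S.functor.mapIso e ≪≫ S.counitIso.app _
    exact hnotSplit (A.isSplitEpi_mor_last_of_conn_eq_zero hA
      ((Preadditive.IsIso.comp_left_eq_zero t.hom A.conn).mp (hconn t.hom)))
  · intro hne t
    by_cases ht : IsSplitEpi t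
    · rcases hU.isZero_or_nonempty_iso_inverse_of_isSplitEpi S t with hZ | hiso
      · exact absurd (A.isSplitEpi_mor_last_of_conn_eq_zero hA (hZ.eq_of_src _ _)) hnotSplit
      · exact absurd hiso hne
    · obtain ⟨h, rfl⟩ := hfactor t ht
      rw [Category.assoc, A.mor_last_comp_conn_eq_zero hA, comp_zero]
end
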